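/- arXiv:1805.01827 — 4 statements merged into one kernel-verified Lean document; each statement's English description precedes it below -/
import Mathlib

section
/- Let (V, E, s, t) be a finite oriented graph with even Laplacian Δ⁺ = I·Iᵀ and odd Laplacian Δ⁻ = Iᵀ·I, regarded as real matrices. Then: (1) for every real λ ≠ 0, the dimension of the kernel of (Δ⁺ − λ·1) equals the dimension of the kernel of (Δ⁻ − λ·1) (nonzero eigenvalues occur with equal multiplicity); and (2) the dimension of the kernel of Δ⁻ equals |E| − |V| + c, where c is the number of connected components of the underlying simple graph G on V in which a ~ b iff a ≠ b and some edge e satisfies {s(e), t(e)} = {a, b}. -/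
open Matrix

/-- The incidence matrix of a finite oriented graph given by source and target maps. -/
noncomputable def incidenceMatrix {V E : Type*} [DecidableEq V] (s t : E → V) :
    Matrix V E ℝ :=
  fun v e => if v = t e then 1 else if v = s e then -1 else 0

/-- The even Laplacian `Δ⁺ = I · Iᵀ` of a finite oriented graph. -/
noncomputable def evenLaplacian {V E : Type*} [Fintype E] [DecidableEq V] (s t : E → V) :
    Matrix V V ℝ :=
  incidenceMatrix s t * (incidenceMatrix s t)ᵀ

/-- The odd Laplacian `Δ⁻ = Iᵀ · I` of a finite oriented graph. -/
noncomputable def oddLaplacian {V E : Type*} [Fintype V] [DecidableEq V] (s t : E → V) :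
    Matrix E E ℝ :=
  (incidenceMatrix s t)ᵀ * incidenceMatrix s t

/-- The underlying simple graph of an oriented graph: `a ~ b` iff `a ≠ b` and some edge
has `{s e, t e} = {a, b}`. -/
def underlyingGraph {V E : Type*} (s t : E → V) : SimpleGraph V where
  Adj a b := a ≠ b ∧ ∃ e : E, ({s e, t e} : Set V) = {a, b}
  symm := by
    constructor
    rintro a b ⟨hab, e, he⟩
    exact ⟨hab.symm, e, he.trans (Set.pair_comm a b)⟩
  loopless := ⟨fun a h => h.1 rfl⟩

/-!
For `λ ≠ 0`, `AB x = λ x` forces `B x ≠ 0` whenever `x ≠ 0`, so `B` embeds the `λ`-eigenspace of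
`AB` into that of `BA`, and symmetrically; for `A = I`, `B = Iᵀ` these are the eigenspaces of
`Δ⁺` and `Δ⁻`. For `λ = 0`, `ker (Iᵀ I) = ker I` over `ℝ`, and rank–nullity for `I` and
`Iᵀ` gives `dim ker I = |E| - |V| + dim ker Iᵀ`. Finally `Iᵀ x = 0` says that `x` agrees at the two
ends of every edge, so `ker Iᵀ` is the space of functions on the connected components.
-/

namespace Matrix

variable {K m n : Type*} [Field K] [Fintype m] [Fintype n]

theorem mulVec_mulVec_eq_smul_of_mem_ker_mul_sub_smul [DecidableEq m] {A : Matrix m n K}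
    {B : Matrix n m K} {lam : K} {x : m → K} (hx : x ∈ LinearMap.ker (A * B - lam • 1).mulVecLin) :
    A *ᵥ (B *ᵥ x) = lam • x := by
  rwa [LinearMap.mem_ker, mulVecLin_apply, sub_mulVec, ← mulVec_mulVec, smul_mulVec,
    one_mulVec, sub_eq_zero] at hx

theorem finrank_ker_mul_sub_smul_le [DecidableEq m] [DecidableEq n] (A : Matrix m n K)
    (B : Matrix n m K) {lam : K} (hlam : lam ≠ 0) :
    Module.finrank K (LinearMap.ker (A * B - lam • 1).mulVecLin) ≤
      Module.finrank K (LinearMap.ker (B * A - lam • 1).mulVecLin) := by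
  have hmaps : ∀ x ∈ LinearMap.ker (A * B - lam • 1).mulVecLin,
      B.mulVecLin x ∈ LinearMap.ker (B * A - lam • 1).mulVecLin := by
    intro x hx
    rw [LinearMap.mem_ker, mulVecLin_apply, mulVecLin_apply, sub_mulVec, ← mulVec_mulVec,
      mulVec_mulVec_eq_smul_of_mem_ker_mul_sub_smul hx, smul_mulVec, one_mulVec, mulVec_smul,
      sub_self]
  refine LinearMap.finrank_le_finrank_of_injective (f := B.mulVecLin.restrict hmaps) ?_
  refine (injective_iff_map_eq_zero _).mpr fun x hx => Subtype.ext ?_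
  have hBx : B *ᵥ (x : m → K) = 0 := congrArg Subtype.val hx
  have hsmul : lam • (x : m → K) = 0 := by
    rw [← mulVec_mulVec_eq_smul_of_mem_ker_mul_sub_smul x.2, hBx, mulVec_zero]
  exact (smul_eq_zero.mp hsmul).resolve_left hlam

theorem finrank_ker_mul_sub_smul_comm [DecidableEq m] [DecidableEq n] (A : Matrix m n K)
    (B : Matrix n m K) {lam : K} (hlam : lam ≠ 0) :
    Module.finrank K (LinearMap.ker (A * B - lam • 1).mulVecLin) =
      Module.finrank K (LinearMap.ker (B * A - lam • 1).mulVecLin) :=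
  le_antisymm (finrank_ker_mul_sub_smul_le A B hlam) (finrank_ker_mul_sub_smul_le B A hlam)

theorem finrank_ker_mulVecLin_add_card (A : Matrix m n K) :
    Module.finrank K (LinearMap.ker A.mulVecLin) + Fintype.card m =
      Module.finrank K (LinearMap.ker Aᵀ.mulVecLin) + Fintype.card n := by
  have hA := A.mulVecLin.finrank_range_add_finrank_ker
  have hAT := Aᵀ.mulVecLin.finrank_range_add_finrank_ker
  have hrank : Module.finrank K (LinearMap.range Aᵀ.mulVecLin) =
      Module.finrank K (LinearMap.range A.mulVecLin) := rank_transpose A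
  rw [Module.finrank_fintype_fun_eq_card] at hA hAT
  omega

end Matrix

theorem SimpleGraph.Reachable.eq_of_forall_adj {V α : Type*} {G : SimpleGraph V} {f : V → α}
    (hf : ∀ a b, G.Adj a b → f a = f b) {a b : V} (h : G.Reachable a b) : f a = f b := by
  have hgen := (SimpleGraph.reachable_iff_reflTransGen a b).mp h
  clear h
  induction hgen with
  | refl => rfl
  | tail _ hbc ih => exact ih.trans (hf _ _ hbc)

section OrientedGraph

variable {V E : Type*} [Fintype V] [DecidableEq V] {s t : E → V}

theorem incidenceMatrix_transpose_mulVec (hst : ∀ e, s e ≠ t e) (x : V → ℝ) :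
    (incidenceMatrix s t)ᵀ *ᵥ x = fun e => x (t e) - x (s e) := by
  ext e
  have hcol : ∀ v, incidenceMatrix s t v e =
      (Pi.single (t e) 1 : V → ℝ) v - (Pi.single (s e) 1 : V → ℝ) v := by
    intro v
    simp only [incidenceMatrix, Pi.single_apply]
    split_ifs <;> simp_all
  simp only [mulVec, dotProduct, transpose_apply, hcol, sub_mul, Finset.sum_sub_distrib,
    Pi.single_apply, ite_mul, one_mul, zero_mul, Finset.sum_ite_eq', Finset.mem_univ, if_true]

theorem mem_ker_incidenceMatrix_transpose_iff (hst : ∀ e, s e ≠ t e) (x : V → ℝ) :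
    x ∈ LinearMap.ker (incidenceMatrix s t)ᵀ.mulVecLin ↔ ∀ e, x (s e) = x (t e) := by
  simp only [LinearMap.mem_ker, mulVecLin_apply, incidenceMatrix_transpose_mulVec hst,
    funext_iff, Pi.zero_apply, sub_eq_zero, eq_comm]

theorem ker_incidenceMatrix_transpose (hst : ∀ e, s e ≠ t e) :
    LinearMap.ker (incidenceMatrix s t)ᵀ.mulVecLin =
      LinearMap.range (LinearMap.funLeft ℝ ℝ (underlyingGraph s t).connectedComponentMk) := by
  ext x
  rw [mem_ker_incidenceMatrix_transpose_iff hst, LinearMap.mem_range]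
  constructor
  · intro hx
    have hadj : ∀ a b, (underlyingGraph s t).Adj a b → x a = x b := by
      rintro a b ⟨-, e, he⟩
      rcases Set.pair_eq_pair_iff.mp he with ⟨rfl, rfl⟩ | ⟨rfl, rfl⟩
      exacts [hx e, (hx e).symm]
    exact ⟨SimpleGraph.ConnectedComponent.lift x fun a b p _ =>
      p.reachable.eq_of_forall_adj hadj, rfl⟩
  · rintro ⟨f, rfl⟩ e
    exact congrArg f (SimpleGraph.ConnectedComponent.sound
      (show (underlyingGraph s t).Adj (s e) (t e) from ⟨hst e, e, rfl⟩).reachable)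

theorem finrank_ker_incidenceMatrix_transpose (hst : ∀ e, s e ≠ t e) :
    Module.finrank ℝ (LinearMap.ker (incidenceMatrix s t)ᵀ.mulVecLin) =
      Nat.card (underlyingGraph s t).ConnectedComponent := by
  have := Fintype.ofFinite (underlyingGraph s t).ConnectedComponent
  rw [ker_incidenceMatrix_transpose hst, LinearMap.finrank_range_of_inj
      (LinearMap.funLeft_injective_of_surjective ℝ ℝ (underlyingGraph s t).connectedComponentMk
        Quot.mk_surjective),
    Module.finrank_fintype_fun_eq_card, Nat.card_eq_fintype_card]

end OrientedGraph

theorem even_odd_laplacian_kernels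
    {V E : Type*} [Fintype V] [Fintype E] [DecidableEq V] [DecidableEq E]
    (s t : E → V) (hst : ∀ e, s e ≠ t e) :
    (∀ lam : ℝ, lam ≠ 0 →
      Module.finrank ℝ
          (LinearMap.ker (Matrix.mulVecLin (evenLaplacian s t - lam • 1))) =
        Module.finrank ℝ
          (LinearMap.ker (Matrix.mulVecLin (oddLaplacian s t - lam • 1)))) ∧
    (Module.finrank ℝ (LinearMap.ker (Matrix.mulVecLin (oddLaplacian s t))) : ℤ) =
      (Fintype.card E : ℤ) - (Fintype.card V : ℤ) +
        (Nat.card (underlyingGraph s t).ConnectedComponent : ℤ) := by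
  refine ⟨fun lam hlam => finrank_ker_mul_sub_smul_comm _ _ hlam, ?_⟩
  have hrank := finrank_ker_mulVecLin_add_card (incidenceMatrix s t)
  rw [oddLaplacian, ker_mulVecLin_transpose_mul_self,
    ← finrank_ker_incidenceMatrix_transpose hst]
  omega
end

section
/- Let Γ₁ be a finite simple graph on V₁ with Laplacian L₁ and Γ₂ a finite simple graph on V₂ with Laplacian L₂; fix v₁ ∈ V₁ and v₂ ∈ V₂. Let Γ be the one-vertex interface gluing of Γ₁ and Γ₂ at (v₁, v₂), with Laplacian L. Then, as polynomials in λ over ℝ: det(L − λ·1) = det(L₁ − λ·1) · det(L₂⟨v₂⟩ − λ·1) + det(L₁⟨v₁⟩ − λ·1) · det(L₂ − λ·1) + λ · det(L₁⟨v₁⟩ − λ·1) · det(L₂⟨v₂⟩ − λ·1), where M⟨v⟩ denotes the principal submatrix of M obtained by deleting the row and column indexed by v. -/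
open Polynomial

open scoped Classical

/-- `det (M - λ·1)`, the characteristic determinant of a square real matrix,
as a polynomial in `λ`. -/
noncomputable def charDet {n : Type*} [Fintype n] [DecidableEq n] (M : Matrix n n ℝ) :
    ℝ[X] :=
  (M.map C - (X : ℝ[X]) • 1).det

/-- The principal submatrix of `M` obtained by deleting the row and column indexed by `v`. -/
def deleteVertex {n : Type*} (M : Matrix n n ℝ) (v : n) :
    Matrix {x : n // x ≠ v} {x : n // x ≠ v} ℝ :=
  M.submatrix Subtype.val Subtype.val

/-- The one-vertex interface gluing of `G₁` and `G₂` at `(v₁, v₂)`: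
the graph on `V₁ ⊕ {x : V₂ // x ≠ v₂}` identifying `v₁` with `v₂`. -/
def interfaceGlueOne {V₁ V₂ : Type*} (G₁ : SimpleGraph V₁) (G₂ : SimpleGraph V₂)
    (v₁ : V₁) (v₂ : V₂) : SimpleGraph (V₁ ⊕ {x : V₂ // x ≠ v₂}) where
  Adj x y :=
    match x, y with
    | Sum.inl u, Sum.inl v => G₁.Adj u v
    | Sum.inr u, Sum.inr v => G₂.Adj u v
    | Sum.inl u, Sum.inr v => u = v₁ ∧ G₂.Adj v₂ v
    | Sum.inr u, Sum.inl v => v = v₁ ∧ G₂.Adj v₂ u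
  symm := by
    constructor
    rintro (u | u) (v | v) h
    · exact G₁.adj_symm h
    · exact h
    · exact h
    · exact G₂.adj_symm h
  loopless := by
    constructor
    rintro (u | u) h
    · exact G₁.irrefl h
    · exact G₂.irrefl h

/-!
The characteristic matrix `L - λ` of the glued Laplacian is the gluing of `L₁ - λ` and `L₂ - λ`,
except that the shared vertex receives `-λ` from both sides, so `λ` must be added back there.
For a glued matrix, split the shared row into its `A`-part and its `B`-part: each summand is
block triangular, with determinant `det A · det B⟨b⟩`, resp. (after exchanging the roles of the
two sides) `det A⟨a⟩ · det B`. Adding `λ` to a diagonal entry adds `λ · det A⟨a⟩`, again by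
linearity in that row.
-/

namespace Matrix

variable {α : Type*} {m n : Type*} [DecidableEq m]

-- The sum of `A` and `B`, each extended by zero, after identifying the index `b` of `B` with `a`.
def glueMatrix [AddCommMonoid α] (A : Matrix m m α) (B : Matrix n n α) (a : m) (b : n) :
    Matrix (m ⊕ {j // j ≠ b}) (m ⊕ {j // j ≠ b}) α :=
  of fun
    | .inl i, .inl i' => A i i' + if i = a ∧ i' = a then B b b else 0
    | .inl i, .inr j => if i = a then B b j else 0
    | .inr j, .inl i => if i = a then B j b else 0
    | .inr j, .inr j' => B j j'

variable (a : m) (b : n)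

theorem glueMatrix_sub [AddCommGroup α] (A A' : Matrix m m α) (B B' : Matrix n n α) :
    glueMatrix (A - A') (B - B') a b = glueMatrix A B a b - glueMatrix A' B' a b := by
  ext (i | j) (i' | j') <;> simp [glueMatrix] <;> split_ifs <;> abel

theorem glueMatrix_map {β F : Type*} [AddCommMonoid α] [AddCommMonoid β] [FunLike F α β]
    [AddMonoidHomClass F α β] (f : F) (A : Matrix m m α) (B : Matrix n n α) :
    (glueMatrix A B a b).map f = glueMatrix (A.map f) (B.map f) a b := by
  ext (i | j) (i' | j') <;> simp [glueMatrix, apply_ite f]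

theorem glueMatrix_sub_smul_one [DecidableEq n] [CommRing α] (A : Matrix m m α)
    (B : Matrix n n α) (c : α) :
    glueMatrix A B a b - c • 1 = glueMatrix (A - c • 1 + single a a c) (B - c • 1) a b := by
  ext (i | j) (i' | j')
  · simp only [glueMatrix, of_apply, sub_apply, add_apply, smul_apply, one_apply, single_apply,
      Sum.inl.injEq, smul_eq_mul]
    split_ifs <;> grind
  · simp [glueMatrix, one_apply, j'.2.symm]
  · simp [glueMatrix, one_apply, j.2]
  · simp [glueMatrix, one_apply, Subtype.ext_iff]

def glueEquiv [DecidableEq n] : n ⊕ {i // i ≠ a} ≃ m ⊕ {j // j ≠ b} where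
  toFun
    | .inl j => if h : j = b then .inl a else .inr ⟨j, h⟩
    | .inr i => .inl i
  invFun
    | .inl i => if h : i = a then .inl b else .inr ⟨i, h⟩
    | .inr j => .inl j
  left_inv := by
    rintro (j | i)
    · by_cases h : j = b <;> simp [h]
    · simp [i.2]
  right_inv := by
    rintro (i | j)
    · by_cases h : i = a <;> simp [h]
    · simp [j.2]

theorem glueMatrix_submatrix_glueEquiv [DecidableEq n] [AddCommMonoid α] (A : Matrix m m α)
    (B : Matrix n n α) :
    (glueMatrix A B a b).submatrix (glueEquiv a b) (glueEquiv a b) = glueMatrix B A b a := by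
  ext (j | i) (j' | i')
  · by_cases h : j = b <;> by_cases h' : j' = b <;> simp [glueEquiv, glueMatrix, h, h', add_comm]
  · by_cases h : j = b <;> simp [glueEquiv, glueMatrix, h, i'.2]
  · by_cases h' : j' = b <;> simp [glueEquiv, glueMatrix, h', i.2]
  · simp [glueEquiv, glueMatrix, i.2, i'.2]

theorem sum_glueMatrix_inl [DecidableEq n] [Fintype m] [Fintype n] [AddCommMonoid α]
    (A : Matrix m m α) (B : Matrix n n α) (i : m) :
    ∑ k, glueMatrix A B a b (.inl i) k = ∑ k, A i k + if i = a then ∑ k, B b k else 0 := by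
  rw [Fintype.sum_sum_type, Fintype.sum_eq_add_sum_subtype_ne (B b) b]
  rcases eq_or_ne i a with rfl | hi
  · simp [glueMatrix, Finset.sum_add_distrib, add_assoc]
  · simp [glueMatrix, hi]

theorem sum_glueMatrix_inr [DecidableEq n] [Fintype m] [Fintype n] [AddCommMonoid α]
    (A : Matrix m m α) (B : Matrix n n α) (j : {j // j ≠ b}) :
    ∑ k, glueMatrix A B a b (.inr j) k = ∑ k, B j k := by
  rw [Fintype.sum_sum_type, Fintype.sum_eq_add_sum_subtype_ne (B j) b]
  simp [glueMatrix]

theorem submatrix_add_single_self [AddZeroClass α] (M : Matrix m m α) (c : α) :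
    ((M + single a a c).submatrix (↑) (↑) : Matrix {i // i ≠ a} {i // i ≠ a} α) =
      M.submatrix (↑) (↑) := by
  ext i j
  simp [i.2.symm]

section Det

variable {R : Type*} [CommRing R] [Fintype m] [Fintype n] [DecidableEq n]

theorem det_updateRow_pi_single_one (M : Matrix m m R) :
    (M.updateRow a (Pi.single a 1)).det =
      (M.submatrix (↑) (↑) : Matrix {i // i ≠ a} {i // i ≠ a} R).det := by
  rw [twoBlockTriangular_det' _ (· = a) fun i hi j hj => by simp [hi, hj]]
  have : Unique {i // i = a} := ⟨⟨⟨a, rfl⟩⟩, fun i => Subtype.ext i.2⟩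
  have hminor : (M.updateRow a (Pi.single a 1)).toSquareBlockProp (fun i => ¬i = a) =
      M.submatrix (↑) (↑) := by
    ext i j
    simp [toSquareBlockProp, toBlock, updateRow_ne i.2]
  rw [hminor]
  simp [det_unique, toSquareBlockProp, toBlock, (default : {i // i = a}).2]

theorem det_add_single (M : Matrix m m R) (c : R) :
    (M + single a a c).det =
      M.det + c * (M.submatrix (↑) (↑) : Matrix {i // i ≠ a} {i // i ≠ a} R).det := by
  have hrow : M + single a a c = M.updateRow a (M a + c • Pi.single a 1) := by
    ext i j
    rcases eq_or_ne i a with rfl | hi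
    · rcases eq_or_ne j i with rfl | hj
      · simp
      · simp [hj, hj.symm]
    · simp [updateRow_ne hi, hi.symm]
  rw [hrow, det_updateRow_add, det_updateRow_smul, updateRow_eq_self, det_updateRow_pi_single_one]

theorem det_updateRow_glueMatrix_inl (A : Matrix m m R) (B : Matrix n n R) :
    ((glueMatrix A B a b).updateRow (.inl a) (Sum.elim (A a) 0)).det =
      A.det * (B.submatrix (↑) (↑) : Matrix {j // j ≠ b} {j // j ≠ b} R).det := by
  have hblocks : (glueMatrix A B a b).updateRow (.inl a) (Sum.elim (A a) 0) =
      fromBlocks A 0 (of fun (j : {j // j ≠ b}) i => if i = a then B j b else 0)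
        (B.submatrix (↑) (↑) : Matrix {j // j ≠ b} {j // j ≠ b} R) := by
    ext (i | j) (i' | j')
    · rcases eq_or_ne i a with rfl | hi <;> simp [glueMatrix, updateRow_apply, *]
    · rcases eq_or_ne i a with rfl | hi <;> simp [glueMatrix, updateRow_apply, *]
    · simp [glueMatrix]
    · simp [glueMatrix]
  rw [hblocks, det_fromBlocks_zero₁₂]

theorem det_glueMatrix (A : Matrix m m R) (B : Matrix n n R) :
    (glueMatrix A B a b).det =
      A.det * (B.submatrix (↑) (↑) : Matrix {j // j ≠ b} {j // j ≠ b} R).det +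
      (A.submatrix (↑) (↑) : Matrix {i // i ≠ a} {i // i ≠ a} R).det * B.det := by
  set rowB : m ⊕ {j // j ≠ b} → R := Sum.elim (Pi.single a (B b b)) (fun j => B b j)
  have hrow : glueMatrix A B a b (.inl a) = Sum.elim (A a) 0 + rowB := by
    ext (i | j)
    · rcases eq_or_ne i a with rfl | hi <;> simp [rowB, glueMatrix, *]
    · simp [rowB, glueMatrix]
  have he : (glueEquiv a b).symm (.inl a) = .inl b := by simp [glueEquiv]
  have hrowB : (fun k => rowB (glueEquiv a b k)) = Sum.elim (B b) 0 := by
    ext (j | i)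
    · rcases eq_or_ne j b with rfl | hj <;> simp [rowB, glueEquiv, *]
    · simp [rowB, glueEquiv, i.2]
  calc (glueMatrix A B a b).det
    _ = ((glueMatrix A B a b).updateRow (.inl a) (Sum.elim (A a) 0)).det +
        ((glueMatrix A B a b).updateRow (.inl a) rowB).det := by
      rw [← det_updateRow_add, ← hrow, updateRow_eq_self]
    _ = _ := by
      rw [← det_submatrix_equiv_self (glueEquiv a b) (updateRow _ _ rowB),
        submatrix_updateRow_equiv, he, hrowB, glueMatrix_submatrix_glueEquiv,
        det_updateRow_glueMatrix_inl, det_updateRow_glueMatrix_inl, mul_comm B.det]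

end Det

end Matrix

open Matrix

namespace SimpleGraph

theorem natCast_degree_eq_sum_adjMatrix {V R : Type*} [Fintype V] [AddCommMonoidWithOne R]
    (G : SimpleGraph V) [DecidableRel G.Adj] (v : V) :
    (G.degree v : R) = ∑ u, G.adjMatrix R v u := by
  simp [degree_eq_sum_if_adj, adjMatrix_apply]

variable {V₁ V₂ : Type*} [DecidableEq V₁]
  (G₁ : SimpleGraph V₁) (G₂ : SimpleGraph V₂) [DecidableRel G₁.Adj] [DecidableRel G₂.Adj]
  (v₁ : V₁) (v₂ : V₂) [DecidableRel (interfaceGlueOne G₁ G₂ v₁ v₂).Adj]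
  (R : Type*)

theorem adjMatrix_interfaceGlueOne [AddCommMonoidWithOne R] :
    (interfaceGlueOne G₁ G₂ v₁ v₂).adjMatrix R =
      (G₁.adjMatrix R).glueMatrix (G₂.adjMatrix R) v₁ v₂ := by
  ext (i | j) (i' | j')
  all_goals rw [adjMatrix_apply]
  -- `congr` matches the `Decidable` instances of two otherwise identical `if`s
  · rcases eq_or_ne i v₁ with rfl | hi <;> simp [interfaceGlueOne, glueMatrix, *] <;> congr
  · rcases eq_or_ne i v₁ with rfl | hi <;> simp [interfaceGlueOne, glueMatrix, *]
  · rcases eq_or_ne i' v₁ with rfl | hi <;> simp [interfaceGlueOne, glueMatrix, adj_comm, *]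
  · simp [interfaceGlueOne, glueMatrix]
    congr

variable [Fintype V₁] [Fintype V₂] [DecidableEq V₂]

theorem degMatrix_interfaceGlueOne [AddCommMonoidWithOne R] :
    (interfaceGlueOne G₁ G₂ v₁ v₂).degMatrix R =
      (G₁.degMatrix R).glueMatrix (G₂.degMatrix R) v₁ v₂ := by
  ext (i | j) (i' | j')
  · rcases eq_or_ne i i' with rfl | hi
    · simp only [degMatrix, diagonal_apply_eq, natCast_degree_eq_sum_adjMatrix,
        adjMatrix_interfaceGlueOne, sum_glueMatrix_inl]
      rcases eq_or_ne i v₁ with rfl | hi <;> simp [glueMatrix, *]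
    · simp [degMatrix, glueMatrix, hi]
      rintro rfl rfl
      exact absurd rfl hi
  · simp [degMatrix, glueMatrix, j'.2.symm]
  · simp [degMatrix, glueMatrix, j.2]
  · rcases eq_or_ne j j' with rfl | hj
    · simp only [degMatrix, diagonal_apply_eq, natCast_degree_eq_sum_adjMatrix,
        adjMatrix_interfaceGlueOne, sum_glueMatrix_inr]
      simp [glueMatrix]
    · simp [degMatrix, glueMatrix, hj, Subtype.val_injective.ne hj]

theorem lapMatrix_interfaceGlueOne [AddCommGroupWithOne R] :
    (interfaceGlueOne G₁ G₂ v₁ v₂).lapMatrix R =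
      (G₁.lapMatrix R).glueMatrix (G₂.lapMatrix R) v₁ v₂ := by
  rw [lapMatrix, lapMatrix, lapMatrix, degMatrix_interfaceGlueOne, adjMatrix_interfaceGlueOne,
    glueMatrix_sub]

end SimpleGraph

theorem charDet_deleteVertex {n : Type*} [Fintype n] [DecidableEq n] (M : Matrix n n ℝ) (v : n) :
    charDet (deleteVertex M v) =
      ((M.map C - (X : ℝ[X]) • 1).submatrix (↑) (↑) : Matrix {i // i ≠ v} {i // i ≠ v} _).det := by
  rw [charDet, deleteVertex]
  congr 1
  ext i j
  simp [one_apply, Subtype.ext_iff]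

theorem charDet_interfaceGlueOne {V₁ V₂ : Type*} [Fintype V₁] [Fintype V₂]
    [DecidableEq V₁] [DecidableEq V₂]
    (G₁ : SimpleGraph V₁) (G₂ : SimpleGraph V₂)
    [DecidableRel G₁.Adj] [DecidableRel G₂.Adj]
    (v₁ : V₁) (v₂ : V₂) :
    charDet ((interfaceGlueOne G₁ G₂ v₁ v₂).lapMatrix ℝ) =
      charDet (G₁.lapMatrix ℝ) * charDet (deleteVertex (G₂.lapMatrix ℝ) v₂) +
      charDet (deleteVertex (G₁.lapMatrix ℝ) v₁) * charDet (G₂.lapMatrix ℝ) +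
      X * (charDet (deleteVertex (G₁.lapMatrix ℝ) v₁) *
        charDet (deleteVertex (G₂.lapMatrix ℝ) v₂)) := by
  rw [charDet, SimpleGraph.lapMatrix_interfaceGlueOne, glueMatrix_map, glueMatrix_sub_smul_one,
    det_glueMatrix, det_add_single, submatrix_add_single_self, charDet_deleteVertex,
    charDet_deleteVertex, charDet, charDet]
  ring
end

section
/- Let Γ be a finite simple graph on Fin m with Laplacian L, and let v₁, v₂ ∈ Fin m be two distinct vertices that are not adjacent in Γ. Let Γ' be the graph obtained from Γ by adding the single edge {v₁, v₂}, with Laplacian L'. Then, as polynomials in λ over ℝ: det(L' − λ·1) = det(L − λ·1) + det(L⟨v₁⟩ − λ·1) + det(L⟨v₂⟩ − λ·1) − 2·(−1)^{v₁+v₂} · det((L − λ·1)_{(v₁,v₂)}), where M⟨v⟩ is the principal submatrix of M deleting row v and column v, M_{(i,j)} is the submatrix of M deleting row i and column j, and (−1)^{v₁+v₂} uses the numerical values of the indices v₁, v₂. -/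
/-! Adding the edge `{v₁, v₂}` adds the rank-one matrix `u uᵀ`, `u = e_{v₁} - e_{v₂}`, to the
Laplacian. For any square matrix `A` over a commutative ring, `det (A + u vᵀ) = det A + vᵀ adj(A) u`
(expand the determinant row by row: terms using the rank-one part in two rows vanish). With
`A = L - λ·1`, which is symmetric, `uᵀ adj(A) u = adj(A)₁₁ + adj(A)₂₂ - 2 adj(A)₁₂`, and the cofactor
description of the adjugate turns these entries into the three minors of the formula. -/

open Polynomial

open scoped Classical

/-- The graph obtained from `G` by adding the single edge `{v₁, v₂}`. -/
def addEdge {m : ℕ} (G : SimpleGraph (Fin m)) (v₁ v₂ : Fin m) (h : v₁ ≠ v₂) :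
    SimpleGraph (Fin m) where
  Adj x y := G.Adj x y ∨ (x = v₁ ∧ y = v₂) ∨ (x = v₂ ∧ y = v₁)
  symm := by
    constructor
    rintro x y (h' | ⟨rfl, rfl⟩ | ⟨rfl, rfl⟩)
    · exact Or.inl (G.adj_symm h')
    · exact Or.inr (Or.inr ⟨rfl, rfl⟩)
    · exact Or.inr (Or.inl ⟨rfl, rfl⟩)
  loopless := by
    constructor
    rintro x (h' | ⟨h1, h2⟩ | ⟨h1, h2⟩)
    · exact G.irrefl h'
    · exact h (h1.symm.trans h2)
    · exact h (h2.symm.trans h1)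

/-- `M - λ·1` over polynomials, whose determinant is the characteristic determinant. -/
noncomputable def charMat {m : ℕ} (M : Matrix (Fin m) (Fin m) ℝ) :
    Matrix (Fin m) (Fin m) ℝ[X] :=
  M.map C - (X : ℝ[X]) • 1

open Finset Matrix

theorem Fintype.sum_finset_of_card_le_one {ι M : Type*} [Fintype ι] [DecidableEq ι]
    [AddCommMonoid M] (g : Finset ι → M) (hg : ∀ s : Finset ι, 1 < #s → g s = 0) :
    ∑ s, g s = g ∅ + ∑ i, g {i} := by
  have hsub : insert ∅ (univ.map ⟨singleton, singleton_injective⟩) ⊆ (univ : Finset (Finset ι)) :=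
    subset_univ _
  rw [← Finset.sum_subset hsub fun s _ hs => hg s ?_, sum_insert (by simp), sum_map]
  · rfl
  · contrapose! hs
    rcases Nat.le_one_iff_eq_zero_or_eq_one.mp hs with h | h
    · simp [Finset.card_eq_zero.mp h]
    · obtain ⟨i, rfl⟩ := Finset.card_eq_one.mp h
      simp

theorem AlternatingMap.map_add_smul_const {R M N ι : Type*} [CommSemiring R] [AddCommMonoid M]
    [Module R M] [AddCommMonoid N] [Module R N] [Fintype ι] [DecidableEq ι]
    (f : M [⋀^ι]→ₗ[R] N) (a : ι → M) (c : ι → R) (w : M) :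
    f (a + fun i => c i • w) = f a + ∑ i, c i • f (Function.update a i w) := by
  have hfactor (s : Finset ι) : f (s.piecewise (fun i => c i • w) a)
      = (∏ i ∈ s, c i) • f (s.piecewise (fun _ => w) a) := by
    have hpiece : s.piecewise (fun i => c i • w) a = s.piecewise
        (fun i => c i • s.piecewise (fun _ => w) a i) (s.piecewise (fun _ => w) a) := by
      ext i
      by_cases hi : i ∈ s <;> simp [hi]
    rw [hpiece]
    exact f.toMultilinearMap.map_piecewise_smul c _ s
  have hvanish (s : Finset ι) (hs : 1 < #s) : f (s.piecewise (fun _ => w) a) = 0 := by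
    obtain ⟨i, hi, j, hj, hij⟩ := one_lt_card.mp hs
    exact f.map_eq_zero_of_eq _ (by simp [hi, hj]) hij
  rw [add_comm, f.map_add_univ, Fintype.sum_finset_of_card_le_one _
    fun s hs => by rw [hfactor, hvanish s hs, smul_zero]]
  simp [Finset.piecewise_singleton]

namespace Matrix

variable {n R : Type*} [Fintype n] [DecidableEq n] [CommRing R]

theorem det_updateRow_eq_vecMul_adjugate (A : Matrix n n R) (i : n) (v : n → R) :
    (A.updateRow i v).det = (v ᵥ* adjugate A) i := by
  rw [← det_transpose, ← updateCol_transpose, ← cramer_apply, cramer_eq_adjugate_mulVec,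
    ← adjugate_transpose, mulVec_transpose]

theorem det_add_vecMulVec (A : Matrix n n R) (u v : n → R) :
    (A + vecMulVec u v).det = A.det + v ⬝ᵥ adjugate A *ᵥ u := by
  have hrows : (A + vecMulVec u v : n → n → R) = (fun i => A i) + fun i => u i • v := by
    ext i j
    simp [vecMulVec_apply]
  calc (A + vecMulVec u v).det
      = detRowAlternating ((fun i => A i) + fun i => u i • v) := congrArg detRowAlternating hrows
    _ = A.det + ∑ i, u i * (A.updateRow i v).det := detRowAlternating.map_add_smul_const _ _ _
    _ = A.det + v ⬝ᵥ adjugate A *ᵥ u := by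
      simp only [det_updateRow_eq_vecMul_adjugate, dotProduct_mulVec, dotProduct_comm _ u]
      rfl

theorem single_sub_single_dotProduct_mulVec (B : Matrix n n R) (i j : n) :
    (Pi.single i 1 - Pi.single j 1) ⬝ᵥ B *ᵥ (Pi.single i 1 - Pi.single j 1)
      = B i i + B j j - B i j - B j i := by
  simp only [mulVec_sub, mulVec_single_one, dotProduct_sub, sub_dotProduct, single_dotProduct,
    one_mul, col_apply]
  ring

end Matrix

namespace SimpleGraph

variable {V : Type*} [Fintype V] {G H : SimpleGraph V}
  [DecidableRel G.Adj] [DecidableRel H.Adj] [DecidableRel (G ⊔ H).Adj]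

theorem degree_sup_of_disjoint (h : Disjoint G H) (x : V) :
    (G ⊔ H).degree x = G.degree x + H.degree x := by
  simp only [← card_neighborFinset_eq_degree, neighborFinset_sup_of_disjoint (h := h),
    Finset.card_disjUnion]

omit [Fintype V] in
theorem adjMatrix_sup_of_disjoint (R : Type*) [AddMonoidWithOne R] (h : Disjoint G H) :
    (G ⊔ H).adjMatrix R = G.adjMatrix R + H.adjMatrix R := by
  ext x y
  have hboth : ¬(G.Adj x y ∧ H.Adj x y) := fun hGH => disjoint_iff_inf_le.mp h hGH
  by_cases hG : G.Adj x y <;> by_cases hH : H.Adj x y <;> simp_all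

variable [DecidableEq V]

theorem lapMatrix_sup_of_disjoint (R : Type*) [Ring R] (h : Disjoint G H) :
    (G ⊔ H).lapMatrix R = G.lapMatrix R + H.lapMatrix R := by
  have hdeg : (G ⊔ H).degMatrix R = G.degMatrix R + H.degMatrix R := by
    simp [degMatrix, degree_sup_of_disjoint h, diagonal_add]
  simp only [lapMatrix, hdeg, adjMatrix_sup_of_disjoint R h]
  abel

theorem lapMatrix_map {R S : Type*} [Ring R] [Ring S] (f : R →+* S) :
    (G.lapMatrix R).map f = G.lapMatrix S := by
  ext x y
  by_cases hxy : x = y <;> by_cases hadj : G.Adj x y <;>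
    simp [lapMatrix, degMatrix, hxy, hadj]

theorem degree_edge {v w : V} (hvw : v ≠ w) [DecidableRel (edge v w).Adj] (x : V) :
    (edge v w).degree x = if x = v ∨ x = w then 1 else 0 := by
  rw [← card_neighborFinset_eq_degree]
  rcases eq_or_ne x v with rfl | hxv
  · have hnbr : (edge x w).neighborFinset x = {w} := by
      ext y
      simp only [mem_neighborFinset, edge_adj, Finset.mem_singleton]
      grind
    simp [hnbr]
  rcases eq_or_ne x w with rfl | hxw
  · have hnbr : (edge v x).neighborFinset x = {v} := by
      ext y
      simp only [mem_neighborFinset, edge_adj, Finset.mem_singleton]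
      grind
    simp [hnbr]
  · have hnbr : (edge v w).neighborFinset x = ∅ := by
      ext y
      simp [edge_adj, hxv, hxw]
    simp [hnbr, hxv, hxw]

theorem lapMatrix_edge (R : Type*) [Ring R] {v w : V} (hvw : v ≠ w)
    [DecidableRel (edge v w).Adj] :
    (edge v w).lapMatrix R
      = vecMulVec (Pi.single v 1 - Pi.single w 1) (Pi.single v 1 - Pi.single w 1) := by
  ext x y
  simp only [lapMatrix, degMatrix, Matrix.sub_apply, diagonal_apply, adjMatrix_apply, edge_adj,
    degree_edge hvw, vecMulVec_apply, Pi.sub_apply, Pi.single_apply]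
  by_cases hxv : x = v <;> by_cases hxw : x = w <;> by_cases hyv : y = v <;>
    by_cases hyw : y = w <;> simp_all [eq_comm]

end SimpleGraph

theorem addEdge_eq_sup_edge {m : ℕ} (G : SimpleGraph (Fin m)) (v₁ v₂ : Fin m) (h : v₁ ≠ v₂) :
    addEdge G v₁ v₂ h = G ⊔ SimpleGraph.edge v₁ v₂ := by
  ext x y
  simp only [addEdge, SimpleGraph.sup_adj, SimpleGraph.edge_adj]
  grind

section charMat

variable {k m : ℕ}

theorem charMat_add (M N : Matrix (Fin m) (Fin m) ℝ) :
    charMat (M + N) = charMat M + N.map C := by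
  rw [charMat, charMat, Matrix.map_add _ (map_add C)]
  abel

theorem charMat_submatrix (M : Matrix (Fin m) (Fin m) ℝ) {f : Fin k → Fin m}
    (hf : Function.Injective f) : charMat (M.submatrix f f) = (charMat M).submatrix f f := by
  ext i j
  simp [charMat, one_apply, hf.eq_iff]

theorem isSymm_charMat {M : Matrix (Fin m) (Fin m) ℝ} (hM : M.IsSymm) : (charMat M).IsSymm := by
  rw [IsSymm, charMat, transpose_sub, ← transpose_map, hM.eq, transpose_smul, transpose_one]

end charMat

theorem charDet_addEdge {m : ℕ} (G : SimpleGraph (Fin (m + 1))) [DecidableRel G.Adj]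
    (v₁ v₂ : Fin (m + 1)) (hne : v₁ ≠ v₂) (hnadj : ¬ G.Adj v₁ v₂) :
    (charMat ((addEdge G v₁ v₂ hne).lapMatrix ℝ)).det =
      (charMat (G.lapMatrix ℝ)).det +
      (charMat ((G.lapMatrix ℝ).submatrix v₁.succAbove v₁.succAbove)).det +
      (charMat ((G.lapMatrix ℝ).submatrix v₂.succAbove v₂.succAbove)).det -
      2 * (-1 : ℝ[X]) ^ ((v₁ : ℕ) + (v₂ : ℕ)) *
        ((charMat (G.lapMatrix ℝ)).submatrix v₁.succAbove v₂.succAbove).det := by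
  set A := charMat (G.lapMatrix ℝ)
  have hchar : charMat ((addEdge G v₁ v₂ hne).lapMatrix ℝ)
      = A + vecMulVec (Pi.single v₁ 1 - Pi.single v₂ 1) (Pi.single v₁ 1 - Pi.single v₂ 1) := by
    have hlap : (addEdge G v₁ v₂ hne).lapMatrix ℝ
        = G.lapMatrix ℝ + (SimpleGraph.edge v₁ v₂).lapMatrix ℝ := by
      rw [addEdge_eq_sup_edge]
      -- `convert` reconciles the classical `DecidableRel` instance of `addEdge` with that of `⊔`.
      convert SimpleGraph.lapMatrix_sup_of_disjoint ℝ (G.disjoint_edge.mpr hnadj)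
    rw [hlap, charMat_add, SimpleGraph.lapMatrix_map, SimpleGraph.lapMatrix_edge _ hne]
  have hdiag (v : Fin (m + 1)) : A.adjugate v v
      = (charMat ((G.lapMatrix ℝ).submatrix v.succAbove v.succAbove)).det := by
    rw [adjugate_fin_succ_eq_det_submatrix, Even.neg_one_pow ⟨v, rfl⟩, one_mul,
      charMat_submatrix _ Fin.succAbove_right_injective]
  have hsymm : A.adjugate v₁ v₂ = A.adjugate v₂ v₁ :=
    (isSymm_charMat (G.isSymm_lapMatrix ℝ)).adjugate.apply v₂ v₁
  rw [hchar, det_add_vecMulVec, single_sub_single_dotProduct_mulVec, hsymm, hdiag, hdiag,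
    adjugate_fin_succ_eq_det_submatrix]
  ring
end

section
/- Let n ≥ 2, let L be the Laplacian matrix of the complete graph K_n on n vertices, and let v be any vertex. Let L⟨v⟩ be the principal submatrix of L obtained by deleting the row and column indexed by v. Then det(L⟨v⟩ − λ·1) = (−1)^{n−1} · (λ − 1) · (λ − n)^{n−2}, as polynomials in λ over ℝ. -/
open Polynomial

/-!
Deleting a vertex of `K_n` leaves `n • 1 - J` on `n - 1` indices, where `J = 𝟙 𝟙ᵀ` is the
all-ones matrix. Since `J` has rank one, its characteristic polynomial is
`X ^ (m - 1) * (X - m)` for `m = n - 1`, and the determinant in question is that polynomial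
composed with `n - X`.
-/

namespace Matrix

variable {m R : Type*} [Fintype m] [DecidableEq m] [CommRing R]

theorem det_smul_one_sub_map_C (M : Matrix m m R) (p : R[X]) :
    (p • (1 : Matrix m m R[X]) - M.map C).det = M.charpoly.comp p := by
  rw [charpoly, ← coe_compRingHom_apply, RingHom.map_det, charmatrix]
  congr 1
  ext i j
  by_cases h : i = j <;> simp [h]

theorem charpoly_vecMulVec_one [Nonempty m] :
    (vecMulVec (1 : m → R) 1).charpoly =
      X ^ (Fintype.card m - 1) * (X - (Fintype.card m : R[X])) := by
  rw [charpoly_vecMulVec, mul_sub, ← pow_succ, Nat.sub_add_cancel Fintype.card_pos]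
  simp [smul_eq_C_mul, mul_comm]

end Matrix

theorem SimpleGraph.lapMatrix_top {V R : Type*} [Fintype V] [DecidableEq V] [Ring R] :
    (⊤ : SimpleGraph V).lapMatrix R =
      Matrix.scalar V (Fintype.card V : R) - Matrix.vecMulVec 1 1 := by
  ext i j
  by_cases h : i = j
  · subst h
    simp [lapMatrix, degMatrix, complete_graph_degree, Matrix.natCast_apply,
      Nat.cast_pred (Fintype.card_pos_iff.mpr ⟨i⟩)]
  · simp [lapMatrix, degMatrix, h, Matrix.natCast_apply]

theorem deleteVertex_lapMatrix_top {V : Type*} [Fintype V] [DecidableEq V] (v : V) :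
    deleteVertex ((⊤ : SimpleGraph V).lapMatrix ℝ) v =
      Matrix.scalar _ (Fintype.card V : ℝ) - Matrix.vecMulVec 1 1 := by
  ext i j
  simp [deleteVertex, SimpleGraph.lapMatrix_top, Matrix.natCast_apply, Subtype.ext_iff]

theorem charDet_lapMatrix_complete_deleted (n : ℕ) (hn : 2 ≤ n) (v : Fin n) :
    ((deleteVertex ((⊤ : SimpleGraph (Fin n)).lapMatrix ℝ) v).map C -
        (X : ℝ[X]) • 1).det =
      (-1 : ℝ[X]) ^ (n - 1) * (X - 1) * (X - C (n : ℝ)) ^ (n - 2) := by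
  have hcard : Fintype.card {x : Fin n // x ≠ v} = n - 1 := by
    rw [Fintype.card_subtype_compl, Fintype.card_subtype_eq, Fintype.card_fin]
  have : Nonempty {x : Fin n // x ≠ v} := Fintype.card_pos_iff.mp (by omega)
  have hshift : (Matrix.scalar {x : Fin n // x ≠ v} (n : ℝ) - Matrix.vecMulVec 1 1).map C -
      (X : ℝ[X]) • 1 = (C (n : ℝ) - X) • 1 - (Matrix.vecMulVec 1 1).map C := by
    rw [Matrix.map_sub _ (map_sub C), Matrix.scalar_apply, Matrix.diagonal_map (map_zero C),
      ← Matrix.smul_one_eq_diagonal]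
    module
  rw [deleteVertex_lapMatrix_top, Fintype.card_fin, hshift, Matrix.det_smul_one_sub_map_C,
    Matrix.charpoly_vecMulVec_one, hcard]
  obtain ⟨k, rfl⟩ := Nat.exists_eq_add_of_le' hn
  simp only [Nat.add_sub_cancel, show k + 2 - 1 = k + 1 by omega, mul_comp, pow_comp, sub_comp,
    X_comp, natCast_comp, map_natCast]
  rw [← neg_sub X, neg_pow]
  push_cast
  ring
end
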